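/- arXiv:2006.15337 — 6 statements merged into one kernel-verified Lean document; each statement's English description precedes it below -/
import Mathlib

section
/- Let P be a finite poset, I a nonempty family of ideals, F a nonempty family of filters with I ∩ F ≠ ∅ for all I ∈ I, F ∈ F, and p ∈ P. Then (I, F) is a dual pair in P if and only if both: (1) the pair ({I \ p^- : I ∈ I}, {F ∈ F : F ∩ p^- = ∅}) is dual in the poset P \ p^-, and (2) the pair ({I ∈ I : I ∩ p^+ = ∅}, {F \ p^+ : F ∈ F}) is dual in the poset P \ p^+. -/
/-- `X` is an ideal (down-closed set) of the subposet induced on `S`. -/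
def IsLowerSetOn {P : Type*} [PartialOrder P] (S X : Set P) : Prop :=
  X ⊆ S ∧ ∀ ⦃x y : P⦄, x ∈ S → y ∈ S → x ≤ y → y ∈ X → x ∈ X

/-- The pair `(𝓘, 𝓕)` of families of ideals and filters is dual in the subposet
induced on `S`: every ideal `X` of `S` contains a member of `𝓘` or its
complement `S \ X` contains a member of `𝓕`. -/
def DualOn {P : Type*} [PartialOrder P] (S : Set P) (𝓘 𝓕 : Set (Set P)) : Prop :=
  ∀ X : Set P, IsLowerSetOn S X → (∃ i ∈ 𝓘, i ⊆ X) ∨ (∃ f ∈ 𝓕, f ⊆ S \ X)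

theorem dual_decompose_element {P : Type*} [PartialOrder P] [Fintype P]
    (𝓘 𝓕 : Set (Set P)) (hI : ∀ i ∈ 𝓘, IsLowerSet i) (hF : ∀ f ∈ 𝓕, IsUpperSet f)
    (hIne : 𝓘.Nonempty) (hFne : 𝓕.Nonempty)
    (hcross : ∀ i ∈ 𝓘, ∀ f ∈ 𝓕, (i ∩ f).Nonempty) (p : P) :
    DualOn (Set.univ : Set P) 𝓘 𝓕 ↔
      (DualOn {x : P | x ≤ p}ᶜ ((fun i => i \ {x : P | x ≤ p}) '' 𝓘)
          {f ∈ 𝓕 | f ∩ {x : P | x ≤ p} = ∅} ∧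
       DualOn {x : P | p ≤ x}ᶜ {i ∈ 𝓘 | i ∩ {x : P | p ≤ x} = ∅}
          ((fun f => f \ {x : P | p ≤ x}) '' 𝓕)) := by
  constructor
  · intro h
    constructor
    · intro X hX
      have hXS := hX.1
      have hY : IsLowerSetOn Set.univ (X ∪ {x | x ≤ p}) := by
        refine ⟨Set.subset_univ _, ?_⟩
        intro x y _ _ hxy hy
        rcases hy with hy | hy
        · by_cases hx : x ≤ p
          · exact Or.inr hx
          · exact Or.inl (hX.2 hx (hXS hy) hxy hy)
        · exact Or.inr (hxy.trans hy)
      rcases h _ hY with ⟨i, hi, hsub⟩ | ⟨f, hf, hsub⟩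
      · left
        exact ⟨i \ {x | x ≤ p}, ⟨i, hi, rfl⟩, fun x hx =>
          ((hsub hx.1).resolve_right hx.2 : x ∈ X)⟩
      · right
        refine ⟨f, ⟨hf, ?_⟩, ?_⟩
        · ext x
          simp only [Set.mem_inter_iff, Set.mem_empty_iff_false, iff_false, not_and]
          intro hxf hxp
          exact (hsub hxf).2 (Or.inr hxp)
        · intro x hx
          have h2 := (hsub hx).2
          exact ⟨fun hxp => h2 (Or.inr hxp), fun hxX => h2 (Or.inl hxX)⟩
    · intro X hX
      have hY : IsLowerSetOn Set.univ X := by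
        refine ⟨Set.subset_univ _, ?_⟩
        intro x y _ _ hxy hy
        have hxS : x ∈ {x | p ≤ x}ᶜ := fun hpx => (hX.1 hy) (hpx.trans hxy)
        exact hX.2 hxS (hX.1 hy) hxy hy
      rcases h _ hY with ⟨i, hi, hsub⟩ | ⟨f, hf, hsub⟩
      · left
        refine ⟨i, ⟨hi, ?_⟩, hsub⟩
        ext x
        simp only [Set.mem_inter_iff, Set.mem_empty_iff_false, iff_false, not_and]
        intro hxi hpx
        exact (hX.1 (hsub hxi)) hpx
      · right
        exact ⟨f \ {x | p ≤ x}, ⟨f, hf, rfl⟩,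
          fun x hx => ⟨hx.2, fun hxX => (hsub hx.1).2 hxX⟩⟩
  · rintro ⟨h1, h2⟩ X hX
    by_cases hp : p ∈ X
    · have hXS : IsLowerSetOn {x | x ≤ p}ᶜ (X \ {x | x ≤ p}) :=
        ⟨fun x hx => hx.2, fun x y hx _ hxy hyX => ⟨hX.2 trivial trivial hxy hyX.1, hx⟩⟩
      rcases h1 _ hXS with ⟨i', ⟨i, hi, rfl⟩, hsub⟩ | ⟨f, ⟨hf, hfp⟩, hsub⟩
      · left
        refine ⟨i, hi, fun x hx => ?_⟩
        by_cases hxp : x ≤ p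
        · exact hX.2 trivial trivial hxp hp
        · exact (hsub ⟨hx, hxp⟩).1
      · right
        refine ⟨f, hf, fun x hx => ⟨trivial, fun hxX => ?_⟩⟩
        have hxp : ¬ x ≤ p := by
          intro hxp
          exact absurd (Set.ext_iff.mp hfp x |>.mp ⟨hx, hxp⟩) (Set.notMem_empty x)
        exact (hsub hx).2 ⟨hxX, hxp⟩
    · have hXdisj : ∀ x ∈ X, ¬ p ≤ x := fun x hx hpx => hp (hX.2 trivial trivial hpx hx)
      have hXS : IsLowerSetOn {x | p ≤ x}ᶜ X :=
        ⟨fun x hx => hXdisj x hx, fun x y _ _ hxy hy => hX.2 trivial trivial hxy hy⟩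
      rcases h2 _ hXS with ⟨i, ⟨hi, _⟩, hsub⟩ | ⟨f', ⟨f, hf, rfl⟩, hsub⟩
      · exact Or.inl ⟨i, hi, hsub⟩
      · right
        refine ⟨f, hf, fun x hx => ⟨trivial, ?_⟩⟩
        by_cases hxp : p ≤ x
        · exact fun hxX => hXdisj x hxX hxp
        · exact (hsub ⟨hx, hxp⟩).2
end

section
/- If (I, F) is a dual pair in a finite poset P with F nonempty, and S is an ideal of P, then the pair (I_S, F^S) is dual in the subposet S, where I_S = {I ∈ I : I ⊆ S} and F^S = {F ∩ S : F ∈ F}. -/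
theorem dual_restrict_ideal {P : Type*} [PartialOrder P] [Fintype P]
    (𝓘 𝓕 : Set (Set P)) (hI : ∀ i ∈ 𝓘, IsLowerSet i) (hF : ∀ f ∈ 𝓕, IsUpperSet f)
    (hFne : 𝓕.Nonempty)
    (hcross : ∀ i ∈ 𝓘, ∀ f ∈ 𝓕, (i ∩ f).Nonempty)
    (S : Set P) (hS : IsLowerSet S)
    (hdual : DualOn (Set.univ : Set P) 𝓘 𝓕) :
    DualOn S {i ∈ 𝓘 | i ⊆ S} ((fun f => f ∩ S) '' 𝓕) := by
  intro X ⟨hXS, hXdown⟩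
  have hXlow : IsLowerSetOn (Set.univ : Set P) X := by
    refine ⟨Set.subset_univ _, fun x y _ _ hxy hyX => ?_⟩
    exact hXdown (hS hxy (hXS hyX)) (hXS hyX) hxy hyX
  rcases hdual X hXlow with ⟨i, hi, hiX⟩ | ⟨f, hf, hfX⟩
  · exact Or.inl ⟨i, ⟨hi, hiX.trans hXS⟩, hiX⟩
  · refine Or.inr ⟨f ∩ S, ⟨f, hf, rfl⟩, fun x ⟨hxf, hxS⟩ => ⟨hxS, (hfX hxf).2⟩⟩
end

section
/- Let P be a finite poset, I a family of ideals and F a nonempty family of filters of P with I ∩ F ≠ ∅ for every I ∈ I and F ∈ F, and let S be an ideal of P. Then (I, F) is dual in P if and only if: (1) (I_S, F^S) is dual in S, and (2) for every Y ∈ F^S, the pair (I restricted to subsets of P \ Y^+, {F \ Y^+ : F ∈ F}) is dual in the subposet P \ Y^+, where Y^+ is the up-closure of Y in P. -/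
theorem dual_decompose_ideal {P : Type*} [PartialOrder P] [Fintype P]
    (𝓘 𝓕 : Set (Set P)) (hI : ∀ i ∈ 𝓘, IsLowerSet i) (hF : ∀ f ∈ 𝓕, IsUpperSet f)
    (hIne : 𝓘.Nonempty) (hFne : 𝓕.Nonempty)
    (hcross : ∀ i ∈ 𝓘, ∀ f ∈ 𝓕, (i ∩ f).Nonempty)
    (S : Set P) (hS : IsLowerSet S) :
    DualOn (Set.univ : Set P) 𝓘 𝓕 ↔
      (DualOn S {i ∈ 𝓘 | i ⊆ S} ((fun f => f ∩ S) '' 𝓕) ∧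
       ∀ Y ∈ (fun f => f ∩ S) '' 𝓕,
         DualOn {x : P | ∃ y ∈ Y, y ≤ x}ᶜ
           {i ∈ 𝓘 | i ⊆ {x : P | ∃ y ∈ Y, y ≤ x}ᶜ}
           ((fun f => f \ {x : P | ∃ y ∈ Y, y ≤ x}) '' 𝓕)) := by
  constructor
  · intro hd
    constructor
    · -- duality on S
      intro X hX
      have hXP : IsLowerSetOn Set.univ X := by
        refine ⟨Set.subset_univ _, fun x y _ _ hxy hyX => ?_⟩
        exact hX.2 (hS hxy (hX.1 hyX)) (hX.1 hyX) hxy hyX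
      rcases hd X hXP with ⟨i, hi, hiX⟩ | ⟨f, hf, hfX⟩
      · exact Or.inl ⟨i, ⟨hi, hiX.trans hX.1⟩, hiX⟩
      · exact Or.inr ⟨f ∩ S, ⟨f, hf, rfl⟩,
          fun x hx => ⟨hx.2, (hfX hx.1).2⟩⟩
    · -- duality on complements of up-closures
      rintro Y ⟨f₀, hf₀, rfl⟩ X hX
      set T : Set P := {x : P | ∃ y ∈ f₀ ∩ S, y ≤ x}ᶜ with hT
      have hTlow : IsLowerSet T := by
        intro x y hxy hyT ⟨z, hz, hzx⟩
        exact hyT ⟨z, hz, hzx.trans hxy⟩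
      have hXP : IsLowerSetOn Set.univ X := by
        refine ⟨Set.subset_univ _, fun x y _ _ hxy hyX => ?_⟩
        exact hX.2 (hTlow hxy (hX.1 hyX)) (hX.1 hyX) hxy hyX
      rcases hd X hXP with ⟨i, hi, hiX⟩ | ⟨f, hf, hfX⟩
      · exact Or.inl ⟨i, ⟨hi, hiX.trans hX.1⟩, hiX⟩
      · exact Or.inr ⟨f \ {x : P | ∃ y ∈ f₀ ∩ S, y ≤ x}, ⟨f, hf, rfl⟩,
          fun x hx => ⟨hx.2, (hfX hx.1).2⟩⟩
  · rintro ⟨h1, h2⟩ X hX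
    have hXl : IsLowerSet X := fun x y hxy hy => hX.2 trivial trivial hxy hy
    have hXS : IsLowerSetOn S (X ∩ S) := by
      refine ⟨Set.inter_subset_right, fun x y hxS _ hxy hy => ⟨hXl hxy hy.1, hxS⟩⟩
    rcases h1 (X ∩ S) hXS with ⟨i, ⟨hi, _⟩, hiXS⟩ | ⟨Y, hYmem, hYsub⟩
    · exact Or.inl ⟨i, hi, hiXS.trans Set.inter_subset_left⟩
    · -- Y ⊆ S \ (X ∩ S), so Y ∩ X = ∅
      have hYX : ∀ x, x ∈ Y → x ∉ X := by
        intro x hxY hxX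
        exact (hYsub hxY).2 ⟨hxX, (hYsub hxY).1⟩
      have hXT : X ⊆ {x : P | ∃ y ∈ Y, y ≤ x}ᶜ := by
        rintro x hxX ⟨y, hyY, hyx⟩
        exact hYX y hyY (hXl hyx hxX)
      have hXonT : IsLowerSetOn {x : P | ∃ y ∈ Y, y ≤ x}ᶜ X :=
        ⟨hXT, fun x y _ _ hxy hy => hXl hxy hy⟩
      rcases h2 Y hYmem X hXonT with ⟨i, ⟨hi, _⟩, hiX⟩ | ⟨g, ⟨f, hf, rfl⟩, hsub⟩
      · exact Or.inl ⟨i, hi, hiX⟩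
      · refine Or.inr ⟨f, hf, fun x hx => ⟨trivial, fun hxX => ?_⟩⟩
        exact (hsub ⟨hx, hXT hxX⟩).2 hxX
end

section
/- Let P be a finite poset, F a family of filters and I a nonempty family of ideals of P with I ∩ F ≠ ∅ for every I ∈ I and F ∈ F, and let S be a filter of P. Then (I, F) is dual in P if and only if: (1) ({I ∩ S : I ∈ I}, {F ∈ F : F ⊆ S}) is dual in the subposet S, and (2) for every Y ∈ {I ∩ S : I ∈ I}, the pair ({I ∩ (P \ Y^-) : I ∈ I}, {F ∈ F : F ⊆ P \ Y^-}) is dual in the subposet P \ Y^-, where Y^- is the down-closure of Y in P. -/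
theorem dual_decompose_filter {P : Type*} [PartialOrder P] [Fintype P]
    (𝓘 𝓕 : Set (Set P)) (hI : ∀ i ∈ 𝓘, IsLowerSet i) (hF : ∀ f ∈ 𝓕, IsUpperSet f)
    (hIne : 𝓘.Nonempty) (hFne : 𝓕.Nonempty)
    (hcross : ∀ i ∈ 𝓘, ∀ f ∈ 𝓕, (i ∩ f).Nonempty)
    (S : Set P) (hS : IsUpperSet S) :
    DualOn (Set.univ : Set P) 𝓘 𝓕 ↔
      (DualOn S ((fun i => i ∩ S) '' 𝓘) {f ∈ 𝓕 | f ⊆ S} ∧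
       ∀ Y ∈ (fun i => i ∩ S) '' 𝓘,
         DualOn {x : P | ∃ y ∈ Y, x ≤ y}ᶜ
           ((fun i => i ∩ {x : P | ∃ y ∈ Y, x ≤ y}ᶜ) '' 𝓘)
           {f ∈ 𝓕 | f ⊆ {x : P | ∃ y ∈ Y, x ≤ y}ᶜ}) := by
  constructor
  · intro hdual
    constructor
    · -- duality on S
      intro X hX
      obtain ⟨hXS, hXlow⟩ := hX
      have hZ : IsLowerSetOn Set.univ (Sᶜ ∪ {x | ∃ y ∈ X, x ≤ y}) := by
        refine ⟨Set.subset_univ _, fun x y _ _ hxy hy => ?_⟩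
        rcases hy with hy | ⟨z, hz, hyz⟩
        · exact Or.inl fun hx => hy (hS hxy hx)
        · exact Or.inr ⟨z, hz, hxy.trans hyz⟩
      rcases hdual _ hZ with ⟨i, hi, hiZ⟩ | ⟨f, hf, hfZ⟩
      · left
        refine ⟨i ∩ S, ⟨i, hi, rfl⟩, ?_⟩
        rintro p ⟨hpi, hpS⟩
        rcases hiZ hpi with h | ⟨z, hzX, hpz⟩
        · exact absurd hpS h
        · exact hXlow hpS (hXS hzX) hpz hzX
      · right
        have hfS : ∀ p ∈ f, p ∈ S ∧ p ∉ X := by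
          intro p hp
          have := (hfZ hp).2
          simp only [Set.mem_union, not_or, Set.mem_compl_iff, not_not,
            Set.mem_setOf_eq] at this
          exact ⟨this.1, fun hpX => this.2 ⟨p, hpX, le_refl p⟩⟩
        exact ⟨f, ⟨hf, fun p hp => (hfS p hp).1⟩,
          fun p hp => ⟨(hfS p hp).1, (hfS p hp).2⟩⟩
    · -- duality on complements of down-closures
      rintro Y ⟨i₀, hi₀, rfl⟩
      set Y := i₀ ∩ S with hY
      intro X hX
      obtain ⟨hXC, hXlow⟩ := hX
      set C : Set P := {x : P | ∃ y ∈ Y, x ≤ y}ᶜ with hC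
      have hZ : IsLowerSetOn Set.univ
          ({x | ∃ y ∈ Y, x ≤ y} ∪ {x | ∃ y ∈ X, x ≤ y}) := by
        refine ⟨Set.subset_univ _, fun x y _ _ hxy hy => ?_⟩
        rcases hy with ⟨z, hz, hyz⟩ | ⟨z, hz, hyz⟩
        · exact Or.inl ⟨z, hz, hxy.trans hyz⟩
        · exact Or.inr ⟨z, hz, hxy.trans hyz⟩
      rcases hdual _ hZ with ⟨i, hi, hiZ⟩ | ⟨f, hf, hfZ⟩
      · left
        refine ⟨i ∩ C, ⟨i, hi, rfl⟩, ?_⟩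
        rintro p ⟨hpi, hpC⟩
        rcases hiZ hpi with h | ⟨z, hzX, hpz⟩
        · exact absurd h hpC
        · exact hXlow hpC (hXC hzX) hpz hzX
      · right
        have hfC : ∀ p ∈ f, p ∈ C ∧ p ∉ X := by
          intro p hp
          have := (hfZ hp).2
          simp only [Set.mem_union, not_or, Set.mem_setOf_eq] at this
          exact ⟨this.1, fun hpX => this.2 ⟨p, hpX, le_refl p⟩⟩
        exact ⟨f, ⟨hf, fun p hp => (hfC p hp).1⟩,
          fun p hp => ⟨(hfC p hp).1, (hfC p hp).2⟩⟩
  · rintro ⟨hdS, hdC⟩ X hX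
    obtain ⟨-, hXlow⟩ := hX
    have hXl : ∀ ⦃x y : P⦄, x ≤ y → y ∈ X → x ∈ X := by
      intro x y hxy hy
      exact hXlow (Set.mem_univ x) (Set.mem_univ y) hxy hy
    -- X ∩ S is an ideal of S
    have h1 : IsLowerSetOn S (X ∩ S) :=
      ⟨Set.inter_subset_right, fun x y hxS _ hxy hy => ⟨hXl hxy hy.1, hxS⟩⟩
    rcases hdS _ h1 with ⟨_, ⟨i, hi, rfl⟩, hiX⟩ | ⟨f, ⟨hf, hfS⟩, hfX⟩
    · -- apply second duality with Y = i ∩ S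
      set Y := i ∩ S with hYdef
      set C : Set P := {x : P | ∃ y ∈ Y, x ≤ y}ᶜ with hC
      have h2 : IsLowerSetOn C (X ∩ C) :=
        ⟨Set.inter_subset_right, fun x y hxC _ hxy hy => ⟨hXl hxy hy.1, hxC⟩⟩
      rcases hdC Y ⟨i, hi, rfl⟩ _ h2 with ⟨_, ⟨j, hj, rfl⟩, hjX⟩ | ⟨f, ⟨hf, hfC⟩, hfX⟩
      · left
        refine ⟨j, hj, fun p hp => ?_⟩
        by_cases hpC : p ∈ C
        · exact (hjX ⟨hp, hpC⟩).1
        · simp only [hC, Set.mem_compl_iff, Set.mem_setOf_eq, not_not] at hpC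
          obtain ⟨y, hyY, hpy⟩ := hpC
          exact hXl hpy (hiX hyY).1
      · right
        refine ⟨f, hf, fun p hp => ⟨Set.mem_univ p, fun hpX => ?_⟩⟩
        exact (hfX hp).2 ⟨hpX, hfC hp⟩
    · right
      refine ⟨f, hf, fun p hp => ⟨Set.mem_univ p, fun hpX => ?_⟩⟩
      exact (hfX hp).2 ⟨hpX, hfS hp⟩
end

section
/- Let P be a finite poset, I a nonempty finite family of ideals of P, and ε₁ < ε₂ in (0,1). Let L = {p ∈ P : deg_I(p) ≥ ε₁|I|} be the set of elements of degree at least ε₁|I| in I. If the number of members of I contained in L is at most (1−ε₂)|I|, then there exists an ideal S of P with L ⊆ S such that (1−ε₂)|I| ≤ |{I ∈ I : I ⊆ S}| < (1−(ε₂−ε₁))|I|. -/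
/-!
Start from `L`, which is an ideal because degrees decrease upwards, and enlarge it one minimal
element of the complement at a time. Every element added lies outside `L`, so the number of
members of `𝓘` inside the current ideal grows by less than `ε₁ |𝓘|` per step. It starts at most
`(1 - ε₂) |𝓘|` and ends at `|𝓘|`, so the first ideal at which it reaches `(1 - ε₂) |𝓘|` is still
below `(1 - ε₂ + ε₁) |𝓘|`.
-/

open scoped Classical

open Finset

section LowerSet

variable {P : Type*} [PartialOrder P]

theorem IsLowerSet.exists_notMem_isLowerSet_insert [Finite P] {S : Set P} (hS : IsLowerSet S)
    (hne : S ≠ Set.univ) : ∃ p ∉ S, IsLowerSet (insert p S) := by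
  obtain ⟨p, hpS, hpmin⟩ :=
    (Set.toFinite Sᶜ).exists_minimal (Set.nonempty_compl.2 hne)
  refine ⟨p, hpS, fun a b hba ha => ?_⟩
  rcases ha with rfl | ha
  · by_cases hb : b ∈ S
    · exact Or.inr hb
    · exact Or.inl (le_antisymm hba (hpmin hb hba))
  · exact Or.inr (hS hba ha)

/-- A discrete intermediate value theorem: ideals can be grown one element at a time, so `f`
cannot jump over `[t, t + δ)`. -/
theorem IsLowerSet.exists_superset_apply_mem_Ico [Finite P] (f : Set P → ℝ) {L : Set P} {t δ : ℝ}
    (hL : IsLowerSet L) (hδ : 0 < δ) (hstep : ∀ S, ∀ p ∉ L, f (insert p S) < f S + δ)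
    (hfL : f L ≤ t) (huniv : t ≤ f Set.univ) :
    ∃ S, IsLowerSet S ∧ L ⊆ S ∧ f S ∈ Set.Ico t (t + δ) := by
  by_cases hLt : t ≤ f L
  · exact ⟨L, hL, subset_rfl, hLt, by linarith⟩
  set C := {S : Set P | IsLowerSet S ∧ L ⊆ S ∧ f S < t}
  obtain ⟨S, ⟨hS, hLS, hSt⟩, hSmax⟩ :=
    (Set.toFinite C).exists_maximal ⟨L, hL, subset_rfl, not_le.1 hLt⟩
  have hSne : S ≠ Set.univ := by
    rintro rfl
    linarith
  obtain ⟨p, hpS, hpS'⟩ := hS.exists_notMem_isLowerSet_insert hSne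
  have hLpS : L ⊆ insert p S := hLS.trans (Set.subset_insert p S)
  have hnotC : ¬ f (insert p S) < t := fun h =>
    hpS (hSmax ⟨hpS', hLpS, h⟩ (Set.subset_insert p S) (Set.mem_insert p S))
  have hgrow := hstep S p (fun hpL => hpS (hLS hpL))
  exact ⟨insert p S, hpS', hLpS, not_lt.1 hnotC, by linarith⟩

end LowerSet

section Family

variable {α : Type*} (𝓘 : Finset (Set α))

theorem card_filter_subset_insert_le (S : Set α) (p : α) :
    #(𝓘.filter (· ⊆ insert p S)) ≤ #(𝓘.filter (· ⊆ S)) + #(𝓘.filter (p ∈ ·)) := by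
  refine (card_le_card fun i hi => ?_).trans (card_union_le _ _)
  simp only [mem_filter, mem_union] at hi ⊢
  by_cases hpi : p ∈ i
  · exact Or.inr ⟨hi.1, hpi⟩
  · exact Or.inl ⟨hi.1, fun x hx => (hi.2 hx).resolve_left (by rintro rfl; exact hpi hx)⟩

theorem card_filter_subset_univ : #(𝓘.filter (· ⊆ Set.univ)) = #𝓘 :=
  congrArg card (filter_true_of_mem fun i _ => Set.subset_univ i)

theorem antitone_card_filter_mem [Preorder α] (h𝓘 : ∀ i ∈ 𝓘, IsLowerSet i) :
    Antitone fun p => #(𝓘.filter (p ∈ ·)) :=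
  fun _ _ hab => card_le_card fun i hi => by
    rw [mem_filter] at hi ⊢
    exact ⟨hi.1, h𝓘 i hi.1 hab hi.2⟩

end Family

theorem balanced_ideal_exists_general {P : Type*} [PartialOrder P] [Fintype P]
    (𝓘 : Finset (Set P)) (h𝓘 : ∀ i ∈ 𝓘, IsLowerSet i) (hne : 𝓘.Nonempty)
    (ε₁ ε₂ : ℝ) (h1 : 0 < ε₁) (h12 : ε₁ < ε₂)
    (L : Set P) (hL : L = {p : P | ε₁ * 𝓘.card ≤ (𝓘.filter (fun i => p ∈ i)).card})
    (hfew : ((𝓘.filter (fun i => i ⊆ L)).card : ℝ) ≤ (1 - ε₂) * 𝓘.card) :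
    ∃ S : Set P, IsLowerSet S ∧ L ⊆ S ∧
      (1 - ε₂) * 𝓘.card ≤ ((𝓘.filter (fun i => i ⊆ S)).card : ℝ) ∧
      ((𝓘.filter (fun i => i ⊆ S)).card : ℝ) < (1 - (ε₂ - ε₁)) * 𝓘.card := by
  have hn : (0 : ℝ) < #𝓘 := by exact_mod_cast hne.card_pos
  have hLlow : IsLowerSet L := by
    subst hL
    intro a b hba ha
    rw [Set.mem_ofPred_eq] at ha ⊢
    exact ha.trans (by exact_mod_cast antitone_card_filter_mem 𝓘 h𝓘 hba)
  have hstep : ∀ S, ∀ p ∉ L,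
      (#(𝓘.filter (· ⊆ insert p S)) : ℝ) < #(𝓘.filter (· ⊆ S)) + ε₁ * #𝓘 := by
    intro S p hp
    have hdeg : (#(𝓘.filter (p ∈ ·)) : ℝ) < ε₁ * #𝓘 := by
      subst hL
      simpa using hp
    have hcount : (#(𝓘.filter (· ⊆ insert p S)) : ℝ) ≤
        #(𝓘.filter (· ⊆ S)) + #(𝓘.filter (p ∈ ·)) := by
      exact_mod_cast card_filter_subset_insert_le 𝓘 S p
    linarith
  obtain ⟨S, hS, hLS, hlo, hhi⟩ :=
    hLlow.exists_superset_apply_mem_Ico (fun S => (#(𝓘.filter (· ⊆ S)) : ℝ))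
      (mul_pos h1 hn) hstep hfew (by rw [card_filter_subset_univ]; nlinarith)
  exact ⟨S, hS, hLS, hlo, by linarith⟩

theorem balanced_ideal_exists {P : Type*} [PartialOrder P] [Fintype P]
    (𝓘 : Finset (Set P)) (h𝓘 : ∀ i ∈ 𝓘, IsLowerSet i) (hne : 𝓘.Nonempty)
    (ε₁ ε₂ : ℝ) (h1 : 0 < ε₁) (h12 : ε₁ < ε₂) (h2 : ε₂ < 1)
    (L : Set P) (hL : L = {p : P | ε₁ * 𝓘.card ≤ (𝓘.filter (fun i => p ∈ i)).card})
    (hfew : ((𝓘.filter (fun i => i ⊆ L)).card : ℝ) ≤ (1 - ε₂) * 𝓘.card) :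
    ∃ S : Set P, IsLowerSet S ∧ L ⊆ S ∧
      (1 - ε₂) * 𝓘.card ≤ ((𝓘.filter (fun i => i ⊆ S)).card : ℝ) ∧
      ((𝓘.filter (fun i => i ⊆ S)).card : ℝ) < (1 - (ε₂ - ε₁)) * 𝓘.card :=
  balanced_ideal_exists_general 𝓘 h𝓘 hne ε₁ ε₂ h1 h12 L hL hfew
end

section
/- Let χ(v) be the unique positive root of (χ/2)^χ = v for v > 1. Then for v ≥ 4, 1 + ((1 − 1/χ(v))v)^{χ(v)} + (v/2)·((2/χ(v))·v)^{χ(v)} ≤ v^{χ(v)}. -/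
theorem chi_recurrence_two (v t : ℝ) (hv : 4 ≤ v) (ht : 0 < t)
    (hchi : (t / 2) ^ t = v) :
    1 + ((1 - 1 / t) * v) ^ t + (v / 2) * ((2 / t) * v) ^ t ≤ v ^ t := by
  have hv0 : (0:ℝ) < v := by linarith
  have ht2 : 2 < t := by
    by_contra h
    push_neg at h
    have h1 : (t / 2 : ℝ) ^ t ≤ 1 :=
      Real.rpow_le_one (by linarith) (by linarith) ht.le
    rw [hchi] at h1
    linarith
  have ht0 : (0:ℝ) < 1 - 1 / t := by
    have h1 : 1 / t < 1 / 2 := by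
      apply one_div_lt_one_div_of_lt <;> linarith
    linarith
  -- (2/t)^t = v⁻¹
  have h2t : (2 / t) ^ t = v⁻¹ := by
    rw [← hchi, ← Real.inv_rpow (by positivity), inv_div]
  have hmul2 : (v / 2) * ((2 / t) * v) ^ t = v ^ t / 2 := by
    rw [Real.mul_rpow (by positivity) hv0.le, h2t]
    field_simp
  -- (1 - 1/t)^t ≤ exp (-1)
  have he : (1 - 1 / t) ^ t ≤ Real.exp (-1) := by
    have h1 : 1 - 1 / t ≤ Real.exp (-(1 / t)) := by
      linarith [Real.add_one_le_exp (-(1 / t))]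
    calc (1 - 1 / t) ^ t ≤ (Real.exp (-(1 / t))) ^ t :=
          Real.rpow_le_rpow ht0.le h1 ht.le
      _ = Real.exp (-(1 / t) * t) := by rw [← Real.exp_mul]
      _ = Real.exp (-1) := by
          rw [neg_mul, div_mul_cancel₀]
          exact ne_of_gt ht
  have hmul1 : ((1 - 1 / t) * v) ^ t ≤ Real.exp (-1) * v ^ t := by
    rw [Real.mul_rpow ht0.le hv0.le]
    have : (0:ℝ) ≤ v ^ t := (Real.rpow_pos_of_pos hv0 t).le
    exact mul_le_mul_of_nonneg_right he this
  have hvt : (16:ℝ) ≤ v ^ t := by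
    calc (16:ℝ) = (4:ℝ) ^ (2:ℝ) := by
          rw [show (2:ℝ) = ((2:ℕ):ℝ) by norm_num, Real.rpow_natCast]; norm_num
      _ ≤ v ^ (2:ℝ) := Real.rpow_le_rpow (by norm_num) hv (by norm_num)
      _ ≤ v ^ t := Real.rpow_le_rpow_of_exponent_le (by linarith) ht2.le
  have hexp : Real.exp (-1) < 0.37 := by
    rw [Real.exp_neg]
    have h1 : (2.7182818283:ℝ) < Real.exp 1 := Real.exp_one_gt_d9
    rw [inv_lt_comm₀ (by linarith) (by norm_num)]
    calc (0.37:ℝ)⁻¹ < 2.7182818283 := by norm_num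
      _ < Real.exp 1 := h1
  rw [hmul2]
  nlinarith [hmul1, hvt, hexp]
end
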